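/- Quantified finite model property: let α be a formula that is not true at some world of some quantum modal structure S, and let Σ be the smallest admissible set of formulas containing α, with |Σ| = n. Then the collapse S* of S with respect to Σ is a quantum modal structure with at most 2^n worlds, and α is not true at some world of S*. -/
import Mathlib


/-- Formulas of quantum modal logic: atoms, conjunction, negation, box. -/
inductive Formula : Type
  | atom : ℕ → Formula
  | and  : Formula → Formula → Formula
  | neg  : Formula → Formula
  | box  : Formula → Formula
deriving DecidableEq

/-- A set `X ⊆ W` is `R_Q`-closed. -/
def RQClosed {W : Type} (RQ : W → W → Prop) (X : Set W) : Prop :=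
  ∀ i : W, i ∈ X ↔ ∀ j : W, RQ i j → ∃ k : W, RQ j k ∧ k ∈ X

/-- A quantum modal structure `⟨W, R_Q, R_M, ρ⟩`. -/
structure QMS where
  W : Type
  nonempty : Nonempty W
  RQ : W → W → Prop
  RM : W → W → Prop
  val : ℕ → Set W
  RQ_refl : ∀ i, RQ i i
  RQ_symm : ∀ i j, RQ i j → RQ j i
  RM_forced : ∀ i l, RM i l → ∀ j, RQ i j → RM j l
  val_closed : ∀ p, RQClosed RQ (val p)

/-- Truth of a formula at a world, relative to relations `RQ`, `RM` and valuation `v`. -/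
def TruthOn {W : Type} (RQ RM : W → W → Prop) (v : ℕ → Set W) : W → Formula → Prop
  | i, .atom p  => i ∈ v p
  | i, .and α β => TruthOn RQ RM v i α ∧ TruthOn RQ RM v i β
  | i, .neg α   => ∀ j, RQ i j → ¬ TruthOn RQ RM v j α
  | i, .box α   => ∀ l, RM i l → TruthOn RQ RM v l α

/-- Truth at a world of a quantum modal structure. -/
def Truth (S : QMS) : S.W → Formula → Prop := TruthOn S.RQ S.RM S.val

/-- A set of formulas is admissible: closed under subformulas and containing `¬p`
whenever it contains an atomic formula `p`. -/
def Admissible (Sg : Set Formula) : Prop :=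
  (∀ α β, Formula.and α β ∈ Sg → α ∈ Sg ∧ β ∈ Sg) ∧
  (∀ α, Formula.neg α ∈ Sg → α ∈ Sg) ∧
  (∀ α, Formula.box α ∈ Sg → α ∈ Sg) ∧
  (∀ p, Formula.atom p ∈ Sg → Formula.neg (Formula.atom p) ∈ Sg)

/-- `i ∼ j` : worlds `i` and `j` satisfy the same formulas of `Sg`. -/
def Sim (S : QMS) (Sg : Set Formula) (i j : S.W) : Prop :=
  ∀ α ∈ Sg, (Truth S i α ↔ Truth S j α)

/-- The setoid on worlds induced by an admissible set. -/
def worldSetoid (S : QMS) (Sg : Set Formula) : Setoid S.W where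
  r := Sim S Sg
  iseqv := ⟨fun _ _ _ => Iff.rfl,
            fun h α hα => (h α hα).symm,
            fun h1 h2 α hα => (h1 α hα).trans (h2 α hα)⟩

/-- The set of worlds `W* = W/∼` of the collapse. -/
def CW (S : QMS) (Sg : Set Formula) : Type := Quotient (worldSetoid S Sg)

/-- The equivalence class `[i]` of a world `i`. -/
def cls (S : QMS) (Sg : Set Formula) (i : S.W) : CW S Sg :=
  Quotient.mk (worldSetoid S Sg) i

/-- `R_Q*([i],[j])` iff there exist `i' ∼ i` and `j' ∼ j` with `R_Q(i',j')`. -/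
def CRQ (S : QMS) (Sg : Set Formula) (x y : CW S Sg) : Prop :=
  ∃ i j : S.W, cls S Sg i = x ∧ cls S Sg j = y ∧ S.RQ i j

/-- `R_M*([i],[l])` iff for every `□α ∈ Σ`, `i ⊨ □α` implies `l ⊨ α`. -/
def CRM (S : QMS) (Sg : Set Formula) (x y : CW S Sg) : Prop :=
  ∃ i l : S.W, cls S Sg i = x ∧ cls S Sg l = y ∧
    ∀ α, Formula.box α ∈ Sg → Truth S i (Formula.box α) → Truth S l α

/-- `ρ*(p) = {[i] : i ∈ ρ(p)}` if `p ∈ Σ`, and `ρ*(p) = ∅` otherwise. -/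
def CVal (S : QMS) (Sg : Set Formula) (p : ℕ) : Set (CW S Sg) :=
  {x | Formula.atom p ∈ Sg ∧ ∃ i : S.W, cls S Sg i = x ∧ i ∈ S.val p}

/-- Truth at a world of the collapse `S*`, defined by the same truth clauses
using `R_Q*`, `R_M*`, `ρ*`. -/
def CTruth (S : QMS) (Sg : Set Formula) : CW S Sg → Formula → Prop :=
  TruthOn (CRQ S Sg) (CRM S Sg) (CVal S Sg)

/-- Derivability of sequents `Γ ⊢ Δ` in the sequent calculus of QML. -/
inductive Deriv : Set Formula → Set Formula → Prop
  | ax (α : Formula) : Deriv {α} {α}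
  | mem (Γ : Set Formula) (α : Formula) :
      Deriv Γ {Formula.box α, Formula.neg (Formula.box α)}
  | wkn (Γ Δ P Q : Set Formula) : Deriv Γ Δ → Deriv (P ∪ Γ) (Δ ∪ Q)
  | cut (Γ₁ Γ₂ Δ₁ Δ₂ : Set Formula) (α : Formula) :
      Deriv Γ₁ (insert α Δ₁) → Deriv (insert α Γ₂) Δ₂ → Deriv (Γ₁ ∪ Γ₂) (Δ₁ ∪ Δ₂)
  | andl1 (α β : Formula) (Γ Δ : Set Formula) :
      Deriv (insert α Γ) Δ → Deriv (insert (Formula.and α β) Γ) Δ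
  | andl2 (α β : Formula) (Γ Δ : Set Formula) :
      Deriv (insert β Γ) Δ → Deriv (insert (Formula.and α β) Γ) Δ
  | andr (α β : Formula) (Γ Δ : Set Formula) :
      Deriv Γ (insert α Δ) → Deriv Γ (insert β Δ) → Deriv Γ (insert (Formula.and α β) Δ)
  | negl (α : Formula) (Γ Δ : Set Formula) :
      Deriv Γ (insert α Δ) → Deriv (insert (Formula.neg α) Γ) Δ
  | negr (α : Formula) (Δ : Set Formula) :
      Deriv {α} Δ → Deriv (Formula.neg '' Δ) {Formula.neg α}
  | negnegl (α : Formula) (Γ Δ : Set Formula) :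
      Deriv (insert α Γ) Δ → Deriv (insert (Formula.neg (Formula.neg α)) Γ) Δ
  | negnegr (α : Formula) (Γ Δ : Set Formula) :
      Deriv Γ (insert α Δ) → Deriv Γ (insert (Formula.neg (Formula.neg α)) Δ)
  | k (α : Formula) (Γ : Set Formula) :
      Deriv Γ {α} → Deriv (Formula.box '' Γ) {Formula.box α}

section Aux

lemma cls_eq_iff (S : QMS) (Sg : Set Formula) {i j : S.W} :
    cls S Sg i = cls S Sg j ↔ Sim S Sg i j :=
  ⟨fun h => Quotient.exact h, fun h => Quotient.sound h⟩

lemma cls_rep (S : QMS) (Sg : Set Formula) (x : CW S Sg) : ∃ i, cls S Sg i = x :=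
  Quotient.exists_rep x

/-- Successors of `i` under `RM` are included in those of `j` when `RQ i j`. -/
lemma box_back (S : QMS) {i j : S.W} (hij : S.RQ i j) {γ : Formula}
    (hj : Truth S j (Formula.box γ)) : Truth S i (Formula.box γ) :=
  fun l hl => hj l (S.RM_forced i l hl j hij)

/-- The filtration lemma. -/
lemma filtration (S : QMS) (Sg : Set Formula) (hadm : Admissible Sg) :
    ∀ β ∈ Sg, ∀ i : S.W, CTruth S Sg (cls S Sg i) β ↔ Truth S i β := by
  intro β
  induction β with
  | atom p =>
    intro hp i
    constructor
    · rintro ⟨_, i0, hi0, hval⟩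
      exact ((cls_eq_iff S Sg).1 hi0 (.atom p) hp).1 hval
    · intro hv
      exact ⟨hp, i, rfl, hv⟩
  | and β γ ihβ ihγ =>
    intro hm i
    obtain ⟨hβ, hγ⟩ := hadm.1 β γ hm
    exact and_congr (ihβ hβ i) (ihγ hγ i)
  | neg β ihβ =>
    intro hm i
    have hβ : β ∈ Sg := hadm.2.1 β hm
    constructor
    · intro hc j hij
      have := hc (cls S Sg j) ⟨i, j, rfl, rfl, hij⟩
      exact fun ht => this ((ihβ hβ j).2 ht)
    · rintro ht y ⟨i', j, hi', rfl, hij⟩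
      have hsim := (cls_eq_iff S Sg).1 hi'
      have hi'neg : Truth S i' (Formula.neg β) := (hsim (Formula.neg β) hm).2 ht
      exact fun hc => hi'neg j hij ((ihβ hβ j).1 hc)
  | box β ihβ =>
    intro hm i
    have hβ : β ∈ Sg := hadm.2.2.1 β hm
    constructor
    · intro hc l hil
      have : CRM S Sg (cls S Sg i) (cls S Sg l) :=
        ⟨i, l, rfl, rfl, fun γ _ hiγ => hiγ l hil⟩
      exact (ihβ hβ l).1 (hc (cls S Sg l) this)
    · rintro ht y ⟨i', l, hi', rfl, hfor⟩
      have hsim := (cls_eq_iff S Sg).1 hi'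
      have : Truth S i' (Formula.box β) := (hsim (Formula.box β) hm).2 ht
      exact (ihβ hβ l).2 (hfor β hm this)

/-- Subformula closure together with negations of atoms. -/
def subf : Formula → Finset Formula
  | .atom p => {.atom p, .neg (.atom p)}
  | .and a b => insert (.and a b) (subf a ∪ subf b)
  | .neg a => insert (.neg a) (subf a)
  | .box a => insert (.box a) (subf a)

lemma mem_subf_self : ∀ β, β ∈ subf β := by
  intro β; cases β <;> simp [subf]

lemma subf_trans : ∀ δ, ∀ β ∈ subf δ, subf β ⊆ subf δ := by
  intro δ
  induction δ with
  | atom p =>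
    intro β hβ
    simp only [subf, Finset.mem_insert, Finset.mem_singleton] at hβ
    rcases hβ with rfl | rfl
    · exact subset_rfl
    · intro x hx
      simp only [subf, Finset.mem_insert, Finset.mem_singleton] at hx ⊢
      tauto
  | and a b iha ihb =>
    intro β hβ
    rw [subf] at hβ ⊢
    rcases Finset.mem_insert.1 hβ with rfl | hβ
    · rw [subf]
    · rcases Finset.mem_union.1 hβ with hβ | hβ
      · exact (iha β hβ).trans ((Finset.subset_union_left).trans (Finset.subset_insert _ _))
      · exact (ihb β hβ).trans ((Finset.subset_union_right).trans (Finset.subset_insert _ _))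
  | neg a iha =>
    intro β hβ
    rw [subf] at hβ ⊢
    rcases Finset.mem_insert.1 hβ with rfl | hβ
    · rw [subf]
    · exact (iha β hβ).trans (Finset.subset_insert _ _)
  | box a iha =>
    intro β hβ
    rw [subf] at hβ ⊢
    rcases Finset.mem_insert.1 hβ with rfl | hβ
    · rw [subf]
    · exact (iha β hβ).trans (Finset.subset_insert _ _)

lemma subf_admissible (α : Formula) : Admissible (↑(subf α) : Set Formula) := by
  refine ⟨?_, ?_, ?_, ?_⟩
  · intro β γ hm
    have h := subf_trans α _ hm
    constructor
    · exact h (by rw [subf]; exact Finset.mem_insert_of_mem (Finset.mem_union_left _ (mem_subf_self β)))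
    · exact h (by rw [subf]; exact Finset.mem_insert_of_mem (Finset.mem_union_right _ (mem_subf_self γ)))
  · intro β hm
    exact subf_trans α _ hm (by rw [subf]; exact Finset.mem_insert_of_mem (mem_subf_self β))
  · intro β hm
    exact subf_trans α _ hm (by rw [subf]; exact Finset.mem_insert_of_mem (mem_subf_self β))
  · intro p hm
    exact subf_trans α _ hm (by simp [subf])

end Aux

/-- Quantified finite model property: if `α` fails at some world of `S`
and `Σ` is the smallest admissible set containing `α` with `|Σ| = n`, then the collapse
`S*` is a quantum modal structure with at most `2^n` worlds falsifying `α` at some world. -/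
theorem quantified_fmp (S : QMS) (α : Formula) (h : ∃ i : S.W, ¬ Truth S i α)
    (Sg : Set Formula) (hadm : Admissible Sg) (hmem : α ∈ Sg)
    (hmin : ∀ T : Set Formula, Admissible T → α ∈ T → Sg ⊆ T)
    (n : ℕ) (hn : Sg.ncard = n) :
    (Nonempty (CW S Sg) ∧
      (∀ x, CRQ S Sg x x) ∧
      (∀ x y, CRQ S Sg x y → CRQ S Sg y x) ∧
      (∀ x z, CRM S Sg x z → ∀ y, CRQ S Sg x y → CRM S Sg y z) ∧
      (∀ p : ℕ, RQClosed (CRQ S Sg) (CVal S Sg p))) ∧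
    Finite (CW S Sg) ∧ Nat.card (CW S Sg) ≤ 2 ^ n ∧
    (∃ x : CW S Sg, ¬ CTruth S Sg x α) := by
  classical
  have hrefl : ∀ x, CRQ S Sg x x := by
    intro x
    obtain ⟨i, rfl⟩ := cls_rep S Sg x
    exact ⟨i, i, rfl, rfl, S.RQ_refl i⟩
  have part1 : (Nonempty (CW S Sg) ∧
      (∀ x, CRQ S Sg x x) ∧
      (∀ x y, CRQ S Sg x y → CRQ S Sg y x) ∧
      (∀ x z, CRM S Sg x z → ∀ y, CRQ S Sg x y → CRM S Sg y z) ∧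
      (∀ p : ℕ, RQClosed (CRQ S Sg) (CVal S Sg p))) := by
    refine ⟨?_, hrefl, ?_, ?_, ?_⟩
    · obtain ⟨i⟩ := S.nonempty; exact ⟨cls S Sg i⟩
    · rintro x y ⟨i, j, hi, hj, hij⟩
      exact ⟨j, i, hj, hi, S.RQ_symm i j hij⟩
    · rintro x z ⟨i, l, hi, hl, hfor⟩ y ⟨i', j, hi', hj, hij⟩
      refine ⟨j, l, hj, hl, fun γ hγ hjγ => ?_⟩
      have hi'γ : Truth S i' (Formula.box γ) := box_back S hij hjγ
      have hsim : Sim S Sg i' i := (cls_eq_iff S Sg).1 (hi'.trans hi.symm)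
      exact hfor γ hγ ((hsim (Formula.box γ) hγ).1 hi'γ)
    · intro p
      by_cases hp : Formula.atom p ∈ Sg
      · intro x
        constructor
        · rintro ⟨-, i, rfl, hiv⟩ y ⟨i', j, hi', rfl, hij⟩
          have hsim : Sim S Sg i' i := (cls_eq_iff S Sg).1 hi'
          have hi'v : i' ∈ S.val p := (hsim (Formula.atom p) hp).2 hiv
          obtain ⟨k, hjk, hkv⟩ := (S.val_closed p i').1 hi'v j hij
          exact ⟨cls S Sg k, ⟨j, k, rfl, rfl, hjk⟩, hp, k, rfl, hkv⟩
        · intro hx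
          obtain ⟨i, rfl⟩ := cls_rep S Sg x
          refine ⟨hp, i, rfl, (S.val_closed p i).2 ?_⟩
          intro j hij
          obtain ⟨z, ⟨j', k, hj', rfl, hj'k⟩, -, k0, hk0, hk0v⟩ :=
            hx (cls S Sg j) ⟨i, j, rfl, rfl, hij⟩
          have hkv : k ∈ S.val p :=
            (((cls_eq_iff S Sg).1 hk0) (Formula.atom p) hp).1 (show Truth S k0 (Formula.atom p) from hk0v)
          have hnp : Formula.neg (Formula.atom p) ∈ Sg := hadm.2.2.2 p hp
          have hsimj : Sim S Sg j' j := (cls_eq_iff S Sg).1 hj'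
          by_contra hcon
          push_neg at hcon
          have hjneg : Truth S j (Formula.neg (Formula.atom p)) := fun k' hjk' hk'v =>
            hcon k' hjk' hk'v
          have hj'neg : Truth S j' (Formula.neg (Formula.atom p)) :=
            (hsimj _ hnp).2 hjneg
          exact hj'neg k hj'k hkv
      · intro x
        constructor
        · rintro ⟨hp', -⟩; exact absurd hp' hp
        · intro hx
          obtain ⟨y, -, hp', -⟩ := hx x (hrefl x)
          exact absurd hp' hp
  -- Finiteness
  have hsub : Sg ⊆ ↑(subf α) := hmin _ (subf_admissible α) (mem_subf_self α)
  have hSgfin : Sg.Finite := Set.Finite.subset (subf α).finite_toSet hsub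
  haveI : Finite ↥Sg := hSgfin.to_subtype
  let f : CW S Sg → (↥Sg → Bool) :=
    Quotient.lift (fun i => fun β : ↥Sg => decide (Truth S i β.1))
      (fun i j hij => funext fun β => by
        rw [decide_eq_decide]; exact hij β.1 β.2)
  have hinj : Function.Injective f := by
    intro x y hxy
    obtain ⟨i, rfl⟩ := cls_rep S Sg x
    obtain ⟨j, rfl⟩ := cls_rep S Sg y
    refine Quotient.sound (fun β hβ => ?_)
    have := congrFun hxy ⟨β, hβ⟩
    exact decide_eq_decide.1 this
  have hfin : Finite (CW S Sg) := Finite.of_injective f hinj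
  have hcard : Nat.card (CW S Sg) ≤ 2 ^ n := by
    calc Nat.card (CW S Sg) ≤ Nat.card (↥Sg → Bool) :=
          Nat.card_le_card_of_injective f hinj
      _ = 2 ^ Nat.card ↥Sg := by rw [Nat.card_fun]; simp
      _ = 2 ^ n := by rw [Nat.card_coe_set_eq, hn]
  obtain ⟨i, hi⟩ := h
  exact ⟨part1, hfin, hcard,
    ⟨cls S Sg i, fun hc => hi ((filtration S Sg hadm α hmem i).1 hc)⟩⟩
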